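/- arXiv:2409.05683 — 2 statements merged into one kernel-verified Lean document; each statement's English description precedes it below -/
import Mathlib

section
/- The function λ ↦ 1 − (1−λ)^{1/λ + 1} is increasing on (0, 1/2]. -/
/-!
Write `(1 - x) ^ (1 / x + 1) = exp ((1 + x) * (log (1 - x) / x))`. The factor `log (1 - x) / x` is
minus the slope of the secant of the concave function `log` through `1` and `1 - x`, so it is
negative and strictly decreasing on `(0, 1)`; multiplied by the positive increasing factor
`1 + x` it stays strictly decreasing, so `1 - (1 - x) ^ (1 / x + 1)` increases on all of `(0, 1)`.
-/

open Real Set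

lemma MonotoneOn.mul_strictAntiOn_of_pos_of_neg {α β : Type*} [Preorder α] [Ring β]
    [PartialOrder β] [IsStrictOrderedRing β] {s : Set α} {f g : α → β} (hf : MonotoneOn f s)
    (hg : StrictAntiOn g s) (hf₀ : ∀ x ∈ s, 0 < f x) (hg₀ : ∀ x ∈ s, g x < 0) :
    StrictAntiOn (fun x => f x * g x) s := by
  intro x hx y hy hxy
  calc f y * g y < f y * g x := mul_lt_mul_of_pos_left (hg hx hy hxy) (hf₀ y hy)
    _ ≤ f x * g x := mul_le_mul_of_nonpos_right (hf hx hy hxy.le) (hg₀ x hx).le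

lemma strictAntiOn_log_one_sub_div : StrictAntiOn (fun x : ℝ => log (1 - x) / x) (Ioo 0 1) := by
  intro x ⟨_, hx₁⟩ y ⟨_, hy₁⟩ hxy
  have key := strictConcaveOn_log_Ioi.secant_strict_mono (a := 1) (mem_Ioi.2 one_pos)
    (sub_pos.2 hy₁) (sub_pos.2 hx₁) (by linarith) (by linarith) (by linarith)
  simp only [log_one, sub_zero, sub_sub_cancel_left, div_neg] at key
  linarith

lemma log_one_sub_div_neg {x : ℝ} (hx : x ∈ Ioo (0 : ℝ) 1) : log (1 - x) / x < 0 :=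
  div_neg_of_neg_of_pos (log_neg (by linarith [hx.2]) (by linarith [hx.1])) hx.1

lemma one_sub_rpow_inv_add_one {x : ℝ} (hx : x ∈ Ioo (0 : ℝ) 1) :
    (1 - x) ^ (1 / x + 1) = exp ((1 + x) * (log (1 - x) / x)) := by
  rw [rpow_def_of_pos (by linarith [hx.2])]
  field_simp [hx.1.ne']

lemma strictAntiOn_one_sub_rpow_inv_add_one :
    StrictAntiOn (fun x : ℝ => (1 - x) ^ (1 / x + 1)) (Ioo 0 1) := by
  have hexponent : StrictAntiOn (fun x : ℝ => (1 + x) * (log (1 - x) / x)) (Ioo 0 1) :=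
    MonotoneOn.mul_strictAntiOn_of_pos_of_neg (fun _ _ _ _ h => by linarith)
      strictAntiOn_log_one_sub_div (fun x hx => by linarith [hx.1]) fun _ => log_one_sub_div_neg
  intro x hx y hy hxy
  dsimp only
  rw [one_sub_rpow_inv_add_one hx, one_sub_rpow_inv_add_one hy]
  exact exp_lt_exp.2 (hexponent hx hy hxy)

theorem strictMonoOn_one_sub_rpow :
    StrictMonoOn (fun l : ℝ => 1 - (1 - l) ^ (1 / l + 1)) (Set.Ioc (0:ℝ) (1/2)) := by
  intro x hx y hy hxy
  have hsub : Ioc (0 : ℝ) (1 / 2) ⊆ Ioo 0 1 := Ioc_subset_Ioo_right (by norm_num)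
  simpa using strictAntiOn_one_sub_rpow_inv_add_one (hsub hx) (hsub hy) hxy
end

section
/- Let n ≥ 1 and a ≥ 1 be integers, let p := ⌊n/a⌋, and for k ∈ {0,…,p−1} set λ_k := 1/(n − k·a). Fix ε ∈ (0,1) and let k₀ := ⌊(1−ε)p⌋. Define μ_m := λ_{⌊(m−1)/a⌋} for m ∈ {1,…,k₀·a}. Then ∑_{m=1}^{k₀·a} |1/(n−m+1) − μ_m| ≤ a/(n − k₀·a) ≤ a/(εn). -/
/-!
Split `{0, …, k₀a - 1}` into the `k₀` blocks `{ka, …, ka + a - 1}`. On block `k` the exact factor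
`1/(n - i)` and the block value `1/(n - ka)` both lie in `[1/(n - ka), 1/(n - (k+1)a)]`, so each
of the `a` errors is at most the length of that interval. These lengths telescope to
`1/(n - k₀a) - 1/n`, and `k₀a ≤ (1 - ε)⌊n/a⌋a ≤ (1 - ε)n` gives `n - k₀a ≥ εn`.
-/

open Finset

theorem abs_one_div_sub_one_div_le {𝕜 : Type*} [Field 𝕜] [LinearOrder 𝕜] [IsStrictOrderedRing 𝕜]
    {lo x hi : 𝕜} (hlo : 0 < lo) (hlo_x : lo ≤ x) (hx_hi : x ≤ hi) :
    |1 / x - 1 / hi| ≤ 1 / lo - 1 / hi := by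
  rw [abs_of_nonneg (sub_nonneg.2 (one_div_le_one_div_of_le (hlo.trans_le hlo_x) hx_hi))]
  gcongr

theorem sum_range_mul_eq_sum_sum_range {M : Type*} [AddCommMonoid M] (f : ℕ → M) (K a : ℕ) :
    ∑ i ∈ range (K * a), f i = ∑ k ∈ range K, ∑ j ∈ range a, f (k * a + j) := by
  induction K with
  | zero => simp
  | succ K ih => rw [Nat.succ_mul, sum_range_add, ih, sum_range_succ]

theorem sum_range_abs_one_div_sub_one_div_block_le {n a k : ℕ} (h : (k + 1) * a < n) :
    ∑ j ∈ range a, |1 / ((n : ℝ) - ((k * a + j : ℕ) : ℝ))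
        - 1 / ((n : ℝ) - (((k * a + j) / a : ℕ) : ℝ) * a)|
      ≤ a * (1 / ((n : ℝ) - (k + 1) * a) - 1 / ((n : ℝ) - k * a)) := by
  have hlo : ((k : ℝ) + 1) * a < n := by exact_mod_cast h
  calc _ ≤ ∑ _j ∈ range a, (1 / ((n : ℝ) - (k + 1) * a) - 1 / ((n : ℝ) - k * a)) := by
        refine sum_le_sum fun j hj => ?_
        have hja : j < a := mem_range.1 hj
        have hdiv : (k * a + j) / a = k :=
          Nat.div_eq_of_lt_le (Nat.le_add_right _ _) (by rw [Nat.succ_mul]; omega)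
        have hja' : (j : ℝ) + 1 ≤ a := by exact_mod_cast hja
        rw [hdiv]
        push_cast
        have hj0 : (0 : ℝ) ≤ j := Nat.cast_nonneg j
        exact abs_one_div_sub_one_div_le (by linarith) (by linarith) (by linarith)
    _ = _ := by rw [sum_const, card_range, nsmul_eq_mul]

theorem sum_range_abs_one_div_sub_one_div_blockwise_le {n a K : ℕ} (h : K * a < n) :
    ∑ i ∈ range (K * a), |1 / ((n : ℝ) - i) - 1 / ((n : ℝ) - ((i / a : ℕ) : ℝ) * a)|
      ≤ a / ((n : ℝ) - K * a) - a / n := by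
  rw [sum_range_mul_eq_sum_sum_range]
  calc _ ≤ ∑ k ∈ range K, a * (1 / ((n : ℝ) - (k + 1) * a) - 1 / ((n : ℝ) - k * a)) :=
        sum_le_sum fun k hk => sum_range_abs_one_div_sub_one_div_block_le
          (lt_of_le_of_lt (Nat.mul_le_mul_right a (mem_range.1 hk)) h)
    _ = a / ((n : ℝ) - K * a) - a / n := by
        have := sum_range_sub (fun k : ℕ => 1 / ((n : ℝ) - k * a)) K
        push_cast at this
        rw [← mul_sum, this]
        ring

theorem sum_Icc_one_eq_sum_range {M : Type*} [AddCommMonoid M] (f : ℕ → M) (N : ℕ) :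
    ∑ m ∈ Icc 1 N, f m = ∑ i ∈ range N, f (i + 1) := by
  rw [range_eq_Ico, sum_Ico_add' f, zero_add, Ico_add_one_right_eq_Icc]

theorem nat_floor_mul_div_mul_le {c : ℝ} (hc : 0 ≤ c) (n a : ℕ) :
    (⌊c * ((n / a : ℕ) : ℝ)⌋₊ : ℝ) * a ≤ c * n :=
  calc (⌊c * ((n / a : ℕ) : ℝ)⌋₊ : ℝ) * a ≤ c * ((n / a : ℕ) : ℝ) * a := by
        gcongr
        exact Nat.floor_le (by positivity)
    _ = c * (((n / a : ℕ) : ℝ) * a) := mul_assoc _ _ _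
    _ ≤ c * n := by
        gcongr
        exact_mod_cast Nat.div_mul_le_self n a

theorem discount_factor_error_sum_general (n a : ℕ)
    (ε : ℝ) (hε : ε ∈ Set.Ioo (0:ℝ) 1)
    (k₀ : ℕ) (hk₀ : k₀ = ⌊(1 - ε) * ((n / a : ℕ) : ℝ)⌋₊) (h : k₀ * a < n) :
    ∑ m ∈ Finset.Icc 1 (k₀ * a),
        |1 / ((n : ℝ) - (m : ℝ) + 1) - 1 / ((n : ℝ) - (((m - 1) / a : ℕ) : ℝ) * (a : ℝ))|
      ≤ (a : ℝ) / ((n : ℝ) - (k₀ : ℝ) * (a : ℝ)) ∧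
    (a : ℝ) / ((n : ℝ) - (k₀ : ℝ) * (a : ℝ)) ≤ (a : ℝ) / (ε * (n : ℝ)) := by
  obtain ⟨hε0, hε1⟩ := hε
  have hn : (0 : ℝ) < n := by exact_mod_cast (Nat.zero_le _).trans_lt h
  have hgap : ε * n ≤ n - k₀ * a := by
    have hk₀a := nat_floor_mul_div_mul_le (sub_nonneg.2 hε1.le) n a
    rw [← hk₀] at hk₀a
    linarith
  refine ⟨?_, div_le_div_of_nonneg_left (Nat.cast_nonneg a) (by positivity) hgap⟩
  rw [sum_Icc_one_eq_sum_range]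
  simp only [Nat.cast_add, Nat.cast_one, add_tsub_cancel_right, sub_add_eq_sub_sub, sub_add_cancel]
  have hsum := sum_range_abs_one_div_sub_one_div_blockwise_le h
  linarith [div_nonneg (Nat.cast_nonneg a) hn.le]

theorem discount_factor_error_sum (n a : ℕ) (hn : 1 ≤ n) (ha : 1 ≤ a)
    (ε : ℝ) (hε : ε ∈ Set.Ioo (0:ℝ) 1)
    (k₀ : ℕ) (hk₀ : k₀ = ⌊(1 - ε) * ((n / a : ℕ) : ℝ)⌋₊) (h : k₀ * a < n) :
    ∑ m ∈ Finset.Icc 1 (k₀ * a),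
        |1 / ((n : ℝ) - (m : ℝ) + 1) - 1 / ((n : ℝ) - (((m - 1) / a : ℕ) : ℝ) * (a : ℝ))|
      ≤ (a : ℝ) / ((n : ℝ) - (k₀ : ℝ) * (a : ℝ)) ∧
    (a : ℝ) / ((n : ℝ) - (k₀ : ℝ) * (a : ℝ)) ≤ (a : ℝ) / (ε * (n : ℝ)) :=
  discount_factor_error_sum_general n a ε hε k₀ hk₀ h
end
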